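/- arXiv:1608.08890 — 2 statements merged into one kernel-verified Lean document; each statement's English description precedes it below -/
import Mathlib

section
/- (Theorem 2.2, formal power series form.) Let f, F and g be formal power series over ℝ, each with constant coefficient 0 and linear coefficient 1, satisfying the two composition identities f(X) = F(g(X)) and F(X) + g(−f(X)) = 0 in ℝ⟦X⟧ (compositions are substitution of a power series with zero constant coefficient). If m > 1 is the smallest integer such that the coefficient of X^m in g is nonzero, then m is even. Equivalently: for every odd m > 1, if all coefficients of X^j in g vanish for 1 < j < m, then the coefficient of X^m in g also vanishes. -/
/-- Composition (substitution) of formal power series over `ℝ`, by the standard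
coefficient formula; it agrees with substitution when the inner series has zero
constant coefficient. -/
noncomputable def pscomp (f g : PowerSeries ℝ) : PowerSeries ℝ :=
  PowerSeries.mk fun n =>
    ∑ k ∈ Finset.range (n + 1), PowerSeries.coeff k f * PowerSeries.coeff n (g ^ k)

/-
Write `g = X + a X^m + O(X^{m+1})`. Reading off the coefficient of `X^m` in the two identities,
only the linear and the `m`-th terms of each composition contribute, giving
`f_m = a + F_m` and `F_m - f_m + (-1)^m a = 0`. For odd `m` these force `a = -a`, so `a = 0`.
-/

open PowerSeries

theorem PowerSeries.coeff_pow_self_of_coeff_zero_eq_zero {R : Type*} [CommSemiring R]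
    {φ : R⟦X⟧} (hφ : coeff 0 φ = 0) (n : ℕ) : coeff n (φ ^ n) = coeff 1 φ ^ n := by
  obtain ⟨ψ, rfl⟩ : X ∣ φ := X_dvd_iff.mpr (by rwa [← coeff_zero_eq_constantCoeff_apply])
  rw [mul_pow, coeff_X_pow_mul', if_pos le_rfl, Nat.sub_self, coeff_zero_eq_constantCoeff,
    map_pow, coeff_succ_X_mul, coeff_zero_eq_constantCoeff]

/-- `g = X ψ` with `ψ = 1 + O(X^{m-1})`, so `g^k = X^k ψ^k` and `ψ^k = 1 + O(X^{m-1})`. -/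
theorem PowerSeries.coeff_pow_eq_zero_of_X_pow_dvd_sub_X {R : Type*} [CommRing R]
    {g : R⟦X⟧} {m k : ℕ} (hg : X ^ m ∣ g - X) (hk : 1 < k) (hkm : k < m) :
    coeff m (g ^ k) = 0 := by
  obtain ⟨q, hq⟩ := hg
  set ψ : R⟦X⟧ := 1 + X ^ (m - 1) * q
  have hgψ : g = X * ψ := by
    rw [← sub_add_cancel g X, hq, ← Nat.sub_add_cancel (by omega : 1 ≤ m)]
    ring
  have hψk : X ^ (m - 1) ∣ ψ ^ k - 1 := by
    have h := sub_dvd_pow_sub_pow ψ 1 k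
    rw [one_pow, show ψ - 1 = X ^ (m - 1) * q from add_sub_cancel_left _ _] at h
    exact (dvd_mul_right _ q).trans h
  rw [hgψ, mul_pow, coeff_X_pow_mul', if_pos hkm.le, ← sub_add_cancel (ψ ^ k) 1, map_add,
    X_pow_dvd_iff.mp hψk _ (by omega), coeff_one, if_neg (by omega), add_zero]

theorem coeff_pscomp_of_middle_terms_vanish {A B : ℝ⟦X⟧} {m : ℕ} (hm : 1 < m)
    (hB : coeff 0 B = 0)
    (hmiddle : ∀ k, 1 < k → k < m → coeff k A * coeff m (B ^ k) = 0) :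
    coeff m (pscomp A B) = coeff 1 A * coeff m B + coeff m A * coeff 1 B ^ m := by
  rw [pscomp, coeff_mk, Finset.sum_range_succ, coeff_pow_self_of_coeff_zero_eq_zero hB,
    Finset.sum_eq_single_of_mem 1 (Finset.mem_range.mpr hm), pow_one]
  intro k hk hk1
  rcases Nat.lt_or_gt_of_ne hk1 with hk0 | hk2
  · rw [Nat.lt_one_iff.mp hk0, pow_zero, coeff_one, if_neg (by omega), mul_zero]
  · exact hmiddle k hk2 (Finset.mem_range.mp hk)

theorem first_nonzero_coeff_even_general (f F g : PowerSeries ℝ)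
    (hf0 : PowerSeries.coeff 0 f = 0) (hf1 : PowerSeries.coeff 1 f = 1)
    (hF1 : PowerSeries.coeff 1 F = 1)
    (hg0 : PowerSeries.coeff 0 g = 0) (hg1 : PowerSeries.coeff 1 g = 1)
    (hcomp1 : f = pscomp F g)
    (hcomp2 : F + pscomp g (-f) = 0)
    (m : ℕ) (hm : 1 < m) (hne : PowerSeries.coeff m g ≠ 0)
    (hmin : ∀ j : ℕ, 1 < j → j < m → PowerSeries.coeff j g = 0) :
    Even m := by
  by_contra hodd
  rw [Nat.not_even_iff_odd] at hodd
  have hgX : X ^ m ∣ g - X := by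
    refine X_pow_dvd_iff.mpr fun j hj => ?_
    rw [map_sub, coeff_X]
    rcases j with _ | _ | j
    · simp [hg0]
    · simp [hg1]
    · rw [if_neg (by omega), hmin _ (by omega) hj, sub_zero]
  have h1 : coeff m f = coeff m g + coeff m F := by
    rw [hcomp1, coeff_pscomp_of_middle_terms_vanish hm hg0 fun k hk hkm => by
      rw [coeff_pow_eq_zero_of_X_pow_dvd_sub_X hgX hk hkm, mul_zero], hF1, hg1]
    ring
  have h2 : coeff m F - coeff m f - coeff m g = 0 := by
    have h := congrArg (coeff m) hcomp2
    rw [map_add, coeff_pscomp_of_middle_terms_vanish hm (by rw [map_neg, hf0, neg_zero]) fun k hk hkm => by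
      rw [hmin k hk hkm, zero_mul]] at h
    simpa [hg1, hf1, hodd.neg_one_pow, sub_eq_add_neg, add_assoc] using h
  exact hne (by linarith)

/-- Theorem 2.2, formal power series form: if `f, F, g` have
zero constant term and unit linear term and satisfy `f(X) = F(g(X))` and
`F(X) + g(−f(X)) = 0`, then the smallest `m > 1` with nonzero coefficient of
`X^m` in `g` is even. -/
theorem first_nonzero_coeff_even (f F g : PowerSeries ℝ)
    (hf0 : PowerSeries.coeff 0 f = 0) (hf1 : PowerSeries.coeff 1 f = 1)
    (hF0 : PowerSeries.coeff 0 F = 0) (hF1 : PowerSeries.coeff 1 F = 1)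
    (hg0 : PowerSeries.coeff 0 g = 0) (hg1 : PowerSeries.coeff 1 g = 1)
    (hcomp1 : f = pscomp F g)
    (hcomp2 : F + pscomp g (-f) = 0)
    (m : ℕ) (hm : 1 < m) (hne : PowerSeries.coeff m g ≠ 0)
    (hmin : ∀ j : ℕ, 1 < j → j < m → PowerSeries.coeff j g = 0) :
    Even m :=
  first_nonzero_coeff_even_general f F g hf0 hf1 hF1 hg0 hg1 hcomp1 hcomp2 m hm hne hmin
end

section
/- (Theorem 2.3, formal power series form.) Let g be a formal power series over ℝ with constant coefficient 0 and linear coefficient 1 satisfying the identity X + g(−g(X)) = 0 in ℝ⟦X⟧ (composition is substitution of a power series with zero constant coefficient). If m > 1 is the smallest integer such that the coefficient of X^m in g is nonzero, then m is even. Equivalently: for every odd m > 1, if all coefficients of X^j in g vanish for 1 < j < m, then the coefficient of X^m in g also vanishes. -/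
namespace PowerSeries

variable {R : Type*} [CommSemiring R] {φ : R⟦X⟧}

theorem coeff_pow_self_of_constantCoeff_eq_zero (hφ : constantCoeff φ = 0) (n : ℕ) :
    coeff n (φ ^ n) = coeff 1 φ ^ n := by
  obtain ⟨ψ, rfl⟩ := X_dvd_iff.mpr hφ
  simp [mul_pow, coeff_X_pow_mul', coeff_succ_X_mul]

end PowerSeries

open PowerSeries

theorem coeff_pscomp_of_coeff_eq_zero_of_lt {f h : ℝ⟦X⟧} {m : ℕ} (hm : 1 < m)
    (hf0 : coeff 0 f = 0) (hgap : ∀ j, 1 < j → j < m → coeff j f = 0) :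
    coeff m (pscomp f h) = coeff 1 f * coeff m h + coeff m f * coeff m (h ^ m) := by
  rw [pscomp, coeff_mk, Finset.sum_eq_add_of_mem 1 m (Finset.mem_range.mpr (by omega))
    (Finset.self_mem_range_succ m) hm.ne, pow_one]
  rintro k hk ⟨hk1, hkm⟩
  rw [Finset.mem_range] at hk
  obtain rfl | hk0 := Nat.eq_zero_or_pos k
  · rw [hf0, zero_mul]
  · rw [hgap k (by omega) (by omega), zero_mul]

/-- Theorem 2.3, formal power series form: if `g` has zero
constant term and unit linear term and satisfies `X + g(−g(X)) = 0`, then the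
smallest `m > 1` with nonzero coefficient of `X^m` in `g` is even. -/
theorem first_nonzero_coeff_even_involution (g : PowerSeries ℝ)
    (hg0 : PowerSeries.coeff 0 g = 0) (hg1 : PowerSeries.coeff 1 g = 1)
    (hcomp : PowerSeries.X + pscomp g (-g) = 0)
    (m : ℕ) (hm : 1 < m) (hne : PowerSeries.coeff m g ≠ 0)
    (hmin : ∀ j : ℕ, 1 < j → j < m → PowerSeries.coeff j g = 0) :
    Even m := by
  by_contra hodd
  rw [Nat.not_even_iff_odd] at hodd
  have hneg0 : constantCoeff (-g) = 0 := by
    rw [map_neg, ← coeff_zero_eq_constantCoeff_apply, hg0, neg_zero]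
  have hcoeff := congrArg (coeff m) hcomp
  rw [map_add, coeff_X, if_neg hm.ne', coeff_pscomp_of_coeff_eq_zero_of_lt hm hg0 hmin,
    coeff_pow_self_of_constantCoeff_eq_zero hneg0, map_neg, map_neg, hg1, hodd.neg_one_pow,
    map_zero] at hcoeff
  exact hne (by linarith)
end
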